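/- Let κ ≥ 1 and let f(x) := x³ - g₂(κ)x² + (g₃(κ)/κ⁹)x - g₃(κ)/κ¹⁵ with g₂, g₃ as in the definitions: g₂(κ) := 1/κ³ + 5/κ⁵ + 11/κ⁶ + 5/κ⁷ + 1/κ⁸ + 2/κ⁹ + 1/κ¹⁰ and g₃(κ) := 8 + 24/κ² + 60/κ³ + 41/κ⁴ + 10/κ⁵ + 21/κ⁶ + 12/κ⁷ + 1/κ⁸ + 2/κ⁹ + 1/κ¹⁰. Then f is monotonically increasing on the interval (4/κ³ + 40/κ⁵, ∞) and monotonically increasing on the interval (-∞, 4/(5κ⁶)). -/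
import Mathlib

noncomputable def g2 (κ : ℝ) : ℝ :=
  1/κ^3 + 5/κ^5 + 11/κ^6 + 5/κ^7 + 1/κ^8 + 2/κ^9 + 1/κ^10

noncomputable def g3 (κ : ℝ) : ℝ :=
  8 + 24/κ^2 + 60/κ^3 + 41/κ^4 + 10/κ^5 + 21/κ^6 + 12/κ^7 + 1/κ^8 + 2/κ^9 + 1/κ^10

noncomputable def f (κ x : ℝ) : ℝ :=
  x^3 - g2 κ * x^2 + (g3 κ / κ^9) * x - g3 κ / κ^15

set_option maxHeartbeats 1000000 in
theorem stmt_5 (κ : ℝ) (hκ : 1 ≤ κ) :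
    MonotoneOn (f κ) (Set.Ioi (4/κ^3 + 40/κ^5)) ∧
    MonotoneOn (f κ) (Set.Iio (4 / (5 * κ^6))) := by
  have hκ0 : 0 < κ := lt_of_lt_of_le one_pos hκ
  have hκne : κ ≠ 0 := hκ0.ne'
  set u : ℝ := κ⁻¹ with hu
  have hu0 : 0 < u := inv_pos.2 hκ0
  have hu1 : u ≤ 1 := by
    rw [hu]; exact inv_le_one_of_one_le₀ hκ
  have hg2 : g2 κ = u^3+5*u^5+11*u^6+5*u^7+u^8+2*u^9+u^10 := by
    simp only [g2, hu]; field_simp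
  have hg3 : g3 κ / κ^9 = 8*u^9+24*u^11+60*u^12+41*u^13+10*u^14+21*u^15+12*u^16+u^17+2*u^18+u^19 := by
    simp only [g3, hu]; field_simp
  have hA : 4/κ^3 + 40/κ^5 = 4*u^3+40*u^5 := by
    rw [hu]; field_simp
  have hB : 4/(5*κ^6) = (4/5)*u^6 := by
    rw [hu]; field_simp
  -- derivative
  have hderiv : ∀ x : ℝ, HasDerivAt (f κ) (3*x^2 - 2*(g2 κ)*x + g3 κ/κ^9) x := by
    intro x
    have h : HasDerivAt (fun x : ℝ => x^3 - g2 κ * x^2 + (g3 κ / κ^9) * x - g3 κ / κ^15)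
        ((3:ℕ)*x^(3-1) - g2 κ * ((2:ℕ)*x^(2-1)) + (g3 κ / κ^9) * 1 - 0) x := by
      exact (((hasDerivAt_pow 3 x).sub ((hasDerivAt_pow 2 x).const_mul (g2 κ))).add
        ((hasDerivAt_id x).const_mul (g3 κ/κ^9))).sub (hasDerivAt_const x _)
    have hfe : f κ = fun x : ℝ => x^3 - g2 κ * x^2 + (g3 κ / κ^9) * x - g3 κ / κ^15 := rfl
    rw [hfe]
    convert h using 1
    push_cast
    ring
  -- power inequalities
  have hp : ∀ n m : ℕ, n ≤ m → u^m ≤ u^n := fun n m h => pow_le_pow_of_le_one hu0.le hu1 h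
  have key : ∀ x : ℝ, (x ∈ Set.Ioi (4/κ^3 + 40/κ^5) ∨ x ∈ Set.Iio (4 / (5*κ^6))) →
      0 ≤ 3*x^2 - 2*(g2 κ)*x + g3 κ/κ^9 := by
    intro x hx
    rw [hg2, hg3]
    rcases hx with hx | hx
    · rw [Set.mem_Ioi, hA] at hx
      have h1 : u^9 ≤ u^8 := hp 8 9 (by norm_num)
      have h2 : u^11 ≤ u^10 := hp 10 11 (by norm_num)
      have h3 : u^12 ≤ u^10 := hp 10 12 (by norm_num)
      have h4 : u^13 ≤ u^10 := hp 10 13 (by norm_num)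
      have h5 : u^14 ≤ u^10 := hp 10 14 (by norm_num)
      have h6 : u^15 ≤ u^10 := hp 10 15 (by norm_num)
      have h7 : u^5 ≤ u^3 := hp 3 5 (by norm_num)
      have h8 : u^6 ≤ u^5 := hp 5 6 (by norm_num)
      have h9 : u^7 ≤ u^5 := hp 5 7 (by norm_num)
      have h10 : u^8 ≤ u^5 := hp 5 8 (by norm_num)
      have h11 : u^9 ≤ u^5 := hp 5 9 (by norm_num)
      have h12 : u^10 ≤ u^5 := hp 5 10 (by norm_num)
      -- q(A) ≥ 0
      have hqA : 0 ≤ 3*(4*u^3+40*u^5)^2 - 2*(u^3+5*u^5+11*u^6+5*u^7+u^8+2*u^9+u^10)*(4*u^3+40*u^5)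
          + (8*u^9+24*u^11+60*u^12+41*u^13+10*u^14+21*u^15+12*u^16+u^17+2*u^18+u^19) := by
        have hid : 3*(4*u^3+40*u^5)^2 - 2*(u^3+5*u^5+11*u^6+5*u^7+u^8+2*u^9+u^10)*(4*u^3+40*u^5)
            + (8*u^9+24*u^11+60*u^12+41*u^13+10*u^14+21*u^15+12*u^16+u^17+2*u^18+u^19)
            = 40*u^6+840*u^8-80*u^9+4360*u^10-864*u^11-356*u^12-47*u^13-150*u^14-59*u^15
              +12*u^16+u^17+2*u^18+u^19 := by ring
        rw [hid]
        have p6 := pow_pos hu0 6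
        have p8 := pow_pos hu0 8
        have p10 := pow_pos hu0 10
        have p16 := pow_pos hu0 16
        have p17 := pow_pos hu0 17
        have p18 := pow_pos hu0 18
        have p19 := pow_pos hu0 19
        linarith
      -- slope : 2*G2 ≤ 3*(x + A)
      have hslope : 2*(u^3+5*u^5+11*u^6+5*u^7+u^8+2*u^9+u^10) ≤ 3*(x + (4*u^3+40*u^5)) := by
        have p3 := pow_pos hu0 3
        have p5 := pow_pos hu0 5
        linarith
      have hid2 : 3*x^2 - 2*(u^3+5*u^5+11*u^6+5*u^7+u^8+2*u^9+u^10)*x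
            + (8*u^9+24*u^11+60*u^12+41*u^13+10*u^14+21*u^15+12*u^16+u^17+2*u^18+u^19)
          = (3*(4*u^3+40*u^5)^2 - 2*(u^3+5*u^5+11*u^6+5*u^7+u^8+2*u^9+u^10)*(4*u^3+40*u^5)
            + (8*u^9+24*u^11+60*u^12+41*u^13+10*u^14+21*u^15+12*u^16+u^17+2*u^18+u^19))
            + (x - (4*u^3+40*u^5)) * (3*(x + (4*u^3+40*u^5))
              - 2*(u^3+5*u^5+11*u^6+5*u^7+u^8+2*u^9+u^10)) := by ring
      rw [hid2]
      have := mul_nonneg (sub_nonneg.2 hx.le) (sub_nonneg.2 hslope)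
      linarith
    · rw [Set.mem_Iio, hB] at hx
      have h1 : u^6 ≤ u^3 := hp 3 6 (by norm_num)
      have h2 : u^6 ≤ u^5 := hp 5 6 (by norm_num)
      -- q(B) ≥ 0 : all coefficients nonneg
      have hqB : 0 ≤ 3*((4/5)*u^6)^2 - 2*(u^3+5*u^5+11*u^6+5*u^7+u^8+2*u^9+u^10)*((4/5)*u^6)
          + (8*u^9+24*u^11+60*u^12+41*u^13+10*u^14+21*u^15+12*u^16+u^17+2*u^18+u^19) := by
        have hid : 3*((4/5)*u^6)^2 - 2*(u^3+5*u^5+11*u^6+5*u^7+u^8+2*u^9+u^10)*((4/5)*u^6)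
            + (8*u^9+24*u^11+60*u^12+41*u^13+10*u^14+21*u^15+12*u^16+u^17+2*u^18+u^19)
            = (32/5)*u^9 + 16*u^11 + (1108/25)*u^12 + 33*u^13 + (42/5)*u^14 + (89/5)*u^15
              + (52/5)*u^16 + u^17 + 2*u^18 + u^19 := by ring
        rw [hid]
        have p9 := pow_pos hu0 9
        have p11 := pow_pos hu0 11
        have p12 := pow_pos hu0 12
        have p13 := pow_pos hu0 13
        have p14 := pow_pos hu0 14
        have p15 := pow_pos hu0 15
        have p16 := pow_pos hu0 16
        have p17 := pow_pos hu0 17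
        have p18 := pow_pos hu0 18
        have p19 := pow_pos hu0 19
        linarith
      have hslope : 3*(x + (4/5)*u^6) ≤ 2*(u^3+5*u^5+11*u^6+5*u^7+u^8+2*u^9+u^10) := by
        have p6 := pow_pos hu0 6
        have p7 := pow_pos hu0 7
        have p8 := pow_pos hu0 8
        have p9 := pow_pos hu0 9
        have p10 := pow_pos hu0 10
        linarith
      have hid2 : 3*x^2 - 2*(u^3+5*u^5+11*u^6+5*u^7+u^8+2*u^9+u^10)*x
            + (8*u^9+24*u^11+60*u^12+41*u^13+10*u^14+21*u^15+12*u^16+u^17+2*u^18+u^19)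
          = (3*((4/5)*u^6)^2 - 2*(u^3+5*u^5+11*u^6+5*u^7+u^8+2*u^9+u^10)*((4/5)*u^6)
            + (8*u^9+24*u^11+60*u^12+41*u^13+10*u^14+21*u^15+12*u^16+u^17+2*u^18+u^19))
            + ((4/5)*u^6 - x) * (2*(u^3+5*u^5+11*u^6+5*u^7+u^8+2*u^9+u^10)
              - 3*(x + (4/5)*u^6)) := by ring
      rw [hid2]
      have := mul_nonneg (sub_nonneg.2 hx.le) (sub_nonneg.2 hslope)
      linarith
  have hdiff : Differentiable ℝ (f κ) := fun x => (hderiv x).differentiableAt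
  have hd' : ∀ x, deriv (f κ) x = 3*x^2 - 2*(g2 κ)*x + g3 κ/κ^9 := fun x => (hderiv x).deriv
  constructor
  · apply monotoneOn_of_deriv_nonneg (convex_Ioi _) hdiff.continuous.continuousOn
      hdiff.differentiableOn
    intro x hx
    rw [interior_Ioi] at hx
    rw [hd' x]; exact key x (Or.inl hx)
  · apply monotoneOn_of_deriv_nonneg (convex_Iio _) hdiff.continuous.continuousOn
      hdiff.differentiableOn
    intro x hx
    rw [interior_Iio] at hx
    rw [hd' x]; exact key x (Or.inr hx)
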